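/- Let S be a semigroup and h : 𝓘↗∞(ℤ) → S a semigroup homomorphism that is not constant (not annihilating). Then either h is injective, or the image h(𝓘↗∞(ℤ)) is a homomorphic image of the group ℤ × ℤ (the direct product of two copies of the additive group of integers), i.e. there exists a surjective homomorphism from ℤ × ℤ onto h(𝓘↗∞(ℤ)). -/

import Mathlib

/-!
If `h` is not injective, a collision `h a = h b` with `a ≠ b` is transported (by composing with a
total map onto `dom a`, then conjugating by a map that skips one point) to an element `d` with
`h d = h 1` and a hole in its domain. Conjugating by translations and multiplying, `h` sends every
partial identity with finitely many holes to `h 1`, so `h` identifies any two elements that agree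
off a finite set. Every element agrees off a finite set with `x ↦ x + p` near `-∞` and `x ↦ x + q`
near `+∞`, and these offsets add under composition; hence `h` factors through `ℤ × ℤ`.
-/

/-- A monotone injective partial self-map of `ℤ` with cofinite domain and cofinite range,
encoded as a function `ℤ → Option ℤ` where `none` means "undefined". -/
structure IsMIP (f : ℤ → Option ℤ) : Prop where
  inj : ∀ ⦃x y a : ℤ⦄, f x = some a → f y = some a → x = y
  mono : ∀ ⦃x y a b : ℤ⦄, f x = some a → f y = some b → x ≤ y → a ≤ b
  cofin_dom : {x : ℤ | f x = none}.Finite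
  cofin_ran : {y : ℤ | ∀ x : ℤ, f x ≠ some y}.Finite

/-- The monoid `𝓘↗∞(ℤ)` of monotone injective partial self-maps of `ℤ`
with cofinite domain and cofinite range. -/
def IZ : Type := {f : ℤ → Option ℤ // IsMIP f}

namespace IZ

/-- Composition of partial maps, written left-to-right: `(pcomp f g) x = g (f x)`. -/
def pcomp (f g : ℤ → Option ℤ) : ℤ → Option ℤ := fun x => (f x).bind g

theorem isMIP_id : IsMIP (fun x : ℤ => some x) := by
  refine ⟨?_, ?_, ?_, ?_⟩
  · intro x y a hx hy; simp_all
  · intro x y a b hx hy h; simp_all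
  · simp
  · have : {y : ℤ | ∀ x : ℤ, (fun x : ℤ => some x) x ≠ some y} = ∅ := by
      ext y; simp
    rw [this]; exact Set.finite_empty

theorem isMIP_comp {f g : ℤ → Option ℤ} (hf : IsMIP f) (hg : IsMIP g) :
    IsMIP (pcomp f g) := by
  refine ⟨?_, ?_, ?_, ?_⟩
  · intro x y a hx hy
    rw [pcomp, Option.bind_eq_some_iff] at hx hy
    obtain ⟨b, hb, hba⟩ := hx
    obtain ⟨c, hc, hca⟩ := hy
    have hbc : b = c := hg.inj hba hca
    subst hbc
    exact hf.inj hb hc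
  · intro x y a b hx hy hxy
    rw [pcomp, Option.bind_eq_some_iff] at hx hy
    obtain ⟨p, hp, hpa⟩ := hx
    obtain ⟨q, hq, hqb⟩ := hy
    exact hg.mono hpa hqb (hf.mono hp hq hxy)
  · have hsub : {x : ℤ | pcomp f g x = none} ⊆
        {x : ℤ | f x = none} ∪ f ⁻¹' (Option.some '' {a : ℤ | g a = none}) := by
      intro x hx
      simp only [Set.mem_setOf_eq, pcomp] at hx
      cases hfx : f x with
      | none => exact Or.inl hfx
      | some a =>
        right
        rw [hfx] at hx
        simp only [Option.bind_some] at hx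
        exact ⟨a, hx, hfx.symm⟩
    refine Set.Finite.subset (Set.Finite.union hf.cofin_dom ?_) hsub
    refine Set.Finite.preimage ?_ (hg.cofin_dom.image _)
    intro x hx y hy hxy
    obtain ⟨a, _, ha⟩ := hx
    obtain ⟨b, _, hb⟩ := hy
    have hfa : f x = some a := ha.symm
    have hfb : f y = some b := hb.symm
    have : some a = some b := by rw [← hfa, ← hfb, hxy]
    rw [Option.some_inj] at this
    subst this
    exact hf.inj hfa hfb
  · have hsub : {y : ℤ | ∀ x : ℤ, pcomp f g x ≠ some y} ⊆
        {y : ℤ | ∀ x : ℤ, g x ≠ some y} ∪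
          ((fun a => (g a).getD 0) '' {a : ℤ | ∀ x : ℤ, f x ≠ some a}) := by
      intro y hy
      simp only [Set.mem_setOf_eq] at hy
      by_cases hgy : ∀ a : ℤ, g a ≠ some y
      · exact Or.inl hgy
      · push_neg at hgy
        obtain ⟨a, hga⟩ := hgy
        right
        refine ⟨a, ?_, by simp [hga]⟩
        intro x hfx
        exact hy x (by simp [pcomp, hfx, hga])
    exact Set.Finite.subset (Set.Finite.union hg.cofin_ran (hf.cofin_ran.image _)) hsub

instance : Monoid IZ where
  one := ⟨fun x => some x, isMIP_id⟩
  mul a b := ⟨pcomp a.1 b.1, isMIP_comp a.2 b.2⟩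
  mul_assoc a b c := by
    apply Subtype.ext
    funext x
    exact Option.bind_assoc (a.1 x) b.1 c.1
  one_mul a := by
    apply Subtype.ext
    funext x
    rfl
  mul_one a := by
    apply Subtype.ext
    funext x
    show (a.1 x).bind some = a.1 x
    cases a.1 x <;> rfl

theorem mul_def (a b : IZ) : (a * b).1 = pcomp a.1 b.1 := rfl

theorem one_def : (1 : IZ).1 = fun x : ℤ => some x := rfl

/-- The domain of an element of `𝓘↗∞(ℤ)`. -/
def dom (a : IZ) : Set ℤ := {x : ℤ | a.1 x ≠ none}

/-- The range of an element of `𝓘↗∞(ℤ)`. -/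
def ran (a : IZ) : Set ℤ := {y : ℤ | ∃ x : ℤ, a.1 x = some y}

end IZ


namespace IZ

open Filter Function

theorem ext {a b : IZ} (h : ∀ x, a.1 x = b.1 x) : a = b := Subtype.ext (funext h)

theorem one_apply (x : ℤ) : (1 : IZ).1 x = some x := rfl

theorem mul_apply (a b : IZ) (x : ℤ) : (a * b).1 x = (a.1 x).bind b.1 := rfl

theorem mul_apply_of_eq_some {a b : IZ} {x y : ℤ} (h : a.1 x = some y) :
    (a * b).1 x = b.1 y := by
  rw [mul_apply, h, Option.bind_some]

theorem apply_lt_apply {a : IZ} {x y u v : ℤ} (hx : a.1 x = some u) (hy : a.1 y = some v)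
    (hxy : x < y) : u < v :=
  (a.2.mono hx hy hxy.le).lt_of_ne fun h => hxy.ne (a.2.inj hx (h ▸ hy))

def IsTotal (a : IZ) : Prop := ∀ x, a.1 x ≠ none

open Classical in
noncomputable def invFun (a : IZ) (y : ℤ) : Option ℤ :=
  if h : ∃ x, a.1 x = some y then some h.choose else none

theorem invFun_eq_some_iff {a : IZ} {x y : ℤ} : invFun a y = some x ↔ a.1 x = some y := by
  unfold invFun
  split_ifs with h
  · rw [Option.some_inj]
    exact ⟨fun e => e ▸ h.choose_spec, a.2.inj h.choose_spec⟩
  · simp only [false_iff]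
    exact fun hx => h ⟨x, hx⟩

theorem isMIP_invFun (a : IZ) : IsMIP (invFun a) where
  inj y y' x hy hy' := by
    rw [invFun_eq_some_iff] at hy hy'
    exact Option.some_inj.mp (hy.symm.trans hy')
  mono y y' x x' hy hy' hle := by
    rw [invFun_eq_some_iff] at hy hy'
    by_contra hlt
    exact (apply_lt_apply hy' hy (not_le.mp hlt)).not_ge hle
  cofin_dom := by
    simpa only [Option.eq_none_iff_forall_ne_some, ne_eq, invFun_eq_some_iff] using a.2.cofin_ran
  cofin_ran := by
    simpa only [ne_eq, invFun_eq_some_iff, ← Option.eq_none_iff_forall_ne_some] using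
      a.2.cofin_dom

noncomputable def inv (a : IZ) : IZ := ⟨invFun a, isMIP_invFun a⟩

theorem inv_apply_eq_some_iff {a : IZ} {x y : ℤ} : (inv a).1 y = some x ↔ a.1 x = some y :=
  invFun_eq_some_iff

theorem inv_apply_eq_none_iff {a : IZ} {y : ℤ} : (inv a).1 y = none ↔ y ∉ ran a := by
  simp only [Option.eq_none_iff_forall_ne_some, ne_eq, inv_apply_eq_some_iff, ran,
    Set.mem_ofPred_eq, not_exists]

theorem mul_inv_of_isTotal {a : IZ} (ha : IsTotal a) : a * inv a = 1 := by
  refine ext fun x => ?_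
  obtain ⟨y, hy⟩ := Option.ne_none_iff_exists'.mp (ha x)
  rw [mul_apply_of_eq_some hy, one_apply, inv_apply_eq_some_iff, hy]

def translation (k : ℤ) : IZ :=
  ⟨fun x => some (x + k),
    { inj := fun x y c hx hy => by simp only [Option.some_inj] at hx hy; omega
      mono := fun x y c d hx hy hxy => by simp only [Option.some_inj] at hx hy; omega
      cofin_dom := by simp
      cofin_ran := Set.finite_empty.subset fun y hy => hy (y - k) (by rw [sub_add_cancel]) }⟩

theorem translation_mul_translation (j k : ℤ) :
    translation j * translation k = translation (j + k) :=
  ext fun x => by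
    rw [mul_apply_of_eq_some rfl]
    exact congrArg some (add_assoc x j k)

theorem translation_zero : translation 0 = 1 := ext fun x => congrArg some (add_zero x)

def skip (w : ℤ) : IZ :=
  ⟨fun x => some (if x < w then x else x + 1),
    { inj := fun x y c hx hy => by
        simp only [Option.some_inj] at hx hy
        split_ifs at hx hy <;> omega
      mono := fun x y c d hx hy hxy => by
        simp only [Option.some_inj] at hx hy
        split_ifs at hx hy <;> omega
      cofin_dom := by simp
      cofin_ran := (Set.finite_singleton w).subset fun y hy => by
        by_contra hne
        rcases lt_or_gt_of_ne hne with h | h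
        · exact hy y (by rw [if_pos h])
        · exact hy (y - 1) (by rw [if_neg (by omega), sub_add_cancel]) }⟩

theorem isTotal_skip (w : ℤ) : IsTotal (skip w) := fun _ => Option.some_ne_none _

theorem mem_ran_skip_iff {w y : ℤ} : y ∈ ran (skip w) ↔ y ≠ w := by
  constructor
  · rintro ⟨x, hx⟩
    simp only [skip, Option.some_inj] at hx
    split_ifs at hx <;> omega
  · intro hne
    rcases lt_or_gt_of_ne hne with h | h
    · exact ⟨y, by simp [skip, h]⟩
    · exact ⟨y - 1, by simp [skip, show ¬ y - 1 < w by omega]⟩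

theorem exists_isTotal_ran_eq_compl (F : Finset ℤ) : ∃ γ : IZ, IsTotal γ ∧ ran γ = (↑F)ᶜ := by
  induction F using Finset.induction_on with
  | empty => exact ⟨1, fun x => Option.some_ne_none x, by ext y; simp [ran, one_apply]⟩
  | insert w F hw ih =>
    obtain ⟨γ, hγ, hran⟩ := ih
    obtain ⟨s, hs⟩ : w ∈ ran γ := by simpa [hran] using hw
    refine ⟨skip s * γ, fun x => ?_, Set.ext fun y => ?_⟩
    · exact (mul_apply_of_eq_some rfl).trans_ne (hγ _)
    · have hcompl : y ∈ (↑(insert w F) : Set ℤ)ᶜ ↔ y ≠ w ∧ y ∈ ran γ := by simp [hran]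
      rw [hcompl]
      constructor
      · rintro ⟨x, hx⟩
        rw [mul_apply_of_eq_some rfl] at hx
        exact ⟨fun hyw => mem_ran_skip_iff.mp ⟨x, rfl⟩ (γ.2.inj hx (hyw ▸ hs)), _, hx⟩
      · rintro ⟨hyw, z, hz⟩
        have hzs : z ≠ s := fun hzs => hyw (Option.some_inj.mp (hz.symm.trans (hzs ▸ hs)))
        obtain ⟨x, hx⟩ := mem_ran_skip_iff.mpr hzs
        exact ⟨x, by rw [mul_apply_of_eq_some hx, hz]⟩

def idOff (F : Finset ℤ) : IZ :=
  ⟨fun x => if x ∈ F then none else some x,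
    { inj := fun x y c hx hy => by
        split_ifs at hx hy
        exact (Option.some_inj.mp hx).trans (Option.some_inj.mp hy).symm
      mono := fun x y c d hx hy hxy => by
        split_ifs at hx hy
        rwa [← Option.some_inj.mp hx, ← Option.some_inj.mp hy]
      cofin_dom := F.finite_toSet.subset fun x hx => by
        by_contra h
        exact Option.some_ne_none x ((if_neg h).symm.trans hx)
      cofin_ran := F.finite_toSet.subset fun y hy => by
        by_contra h
        exact hy y (if_neg h) }⟩

theorem idOff_mul_apply (F : Finset ℤ) (a : IZ) (x : ℤ) :
    (idOff F * a).1 x = if x ∈ F then none else a.1 x := by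
  rw [mul_apply]
  split_ifs with h <;> simp [idOff, h]

theorem idOff_empty : idOff ∅ = 1 := ext fun x => by simp [idOff, one_apply]

theorem idOff_union (F G : Finset ℤ) : idOff (F ∪ G) = idOff F * idOff G :=
  ext fun x => by
    rw [idOff_mul_apply]
    by_cases hF : x ∈ F <;> by_cases hG : x ∈ G <;> simp [idOff, hF, hG]

theorem translation_mul_idOff_mul_translation (j k : ℤ) :
    translation j * idOff {k} * translation (-j) = idOff {k - j} :=
  ext fun x => by
    rw [mul_assoc, mul_apply_of_eq_some rfl, idOff_mul_apply]
    by_cases hx : x = k - j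
    · simp [idOff, hx]
    · simp [idOff, translation, show x + j ≠ k by omega, hx]

section MulHom

variable {S : Type*} [Semigroup S] (f : IZ →ₙ* S)

theorem map_mul_mul_of_map_eq_map_one {c : IZ} (hc : f c = f 1) (x y : IZ) :
    f (x * c * y) = f (x * y) := by
  rw [map_mul, map_mul, hc, ← map_mul, ← map_mul, mul_one]

theorem exists_map_eq_map_one_apply_ne (hf : ¬ Injective f) :
    ∃ (c : IZ) (t : ℤ), f c = f 1 ∧ c.1 t ≠ some t := by
  obtain ⟨a, b, hfab, hab⟩ := Function.not_injective_iff.mp hf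
  obtain ⟨x₀, hx₀⟩ : ∃ x, a.1 x ≠ b.1 x := by
    by_contra! h
    exact hab (ext h)
  wlog ha : a.1 x₀ ≠ none generalizing a b
  · rw [not_not] at ha
    exact this b a hfab.symm hab.symm hx₀.symm (ha ▸ hx₀.symm)
  obtain ⟨u, hu⟩ := Option.ne_none_iff_exists'.mp ha
  -- precomposing with `γ` makes `a` total, hence right invertible, while keeping `x₀` in sight
  obtain ⟨γ, hγ, hran⟩ := exists_isTotal_ran_eq_compl a.2.cofin_dom.toFinset
  have hγa : ∀ y ∈ ran γ, a.1 y ≠ none := fun y hy => by simpa [hran] using hy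
  obtain ⟨t, ht⟩ : x₀ ∈ ran γ := by simpa [hran] using ha
  have hA : IsTotal (γ * a) := fun x => by
    obtain ⟨y, hy⟩ := Option.ne_none_iff_exists'.mp (hγ x)
    rw [mul_apply_of_eq_some hy]
    exact hγa y ⟨x, hy⟩
  refine ⟨γ * b * inv (γ * a), t, ?_, fun hc => ?_⟩
  · rw [map_mul, map_mul, ← hfab, ← map_mul, ← map_mul, mul_inv_of_isTotal hA]
  · rw [mul_apply, mul_apply_of_eq_some ht, Option.bind_eq_some_iff] at hc
    obtain ⟨y, hy, hyt⟩ := hc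
    rw [inv_apply_eq_some_iff, mul_apply_of_eq_some ht, hu] at hyt
    exact hx₀ (hu.trans (hyt ▸ hy).symm)

theorem exists_map_eq_map_one_apply_eq_none {c : IZ} {t : ℤ} (hc : f c = f 1)
    (ht : c.1 t ≠ some t) : ∃ (d : IZ) (y : ℤ), f d = f 1 ∧ d.1 y = none := by
  rcases hct : c.1 t with _ | w
  · exact ⟨c, t, hc, hct⟩
  obtain ⟨y, hy⟩ : t ∈ ran (skip w) := mem_ran_skip_iff.mpr fun htw => ht (htw ▸ hct)
  refine ⟨skip w * c * inv (skip w), y, ?_, ?_⟩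
  · rw [map_mul_mul_of_map_eq_map_one f hc, mul_inv_of_isTotal (isTotal_skip w)]
  · rw [mul_apply_of_eq_some ((mul_apply_of_eq_some hy).trans hct), inv_apply_eq_none_iff,
      mem_ran_skip_iff, not_not]

theorem map_idOff_singleton_eq_map_one {d : IZ} {y : ℤ} (hd : f d = f 1) (hy : d.1 y = none)
    (k : ℤ) : f (idOff {k}) = f 1 := by
  have hyd : idOff {y} * d = d := ext fun x => by
    rw [idOff_mul_apply]
    split_ifs with hx
    · rw [Finset.mem_singleton.mp hx, hy]
    · rfl
  have hfy : f (idOff {y}) = f 1 := by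
    simpa only [hyd, mul_one, hd, eq_comm] using map_mul_mul_of_map_eq_map_one f hd (idOff {y}) 1
  -- conjugating by a translation moves the hole from `y` to `k`
  rw [← sub_sub_cancel y k, ← translation_mul_idOff_mul_translation,
    map_mul_mul_of_map_eq_map_one f hfy, translation_mul_translation, add_neg_cancel,
    translation_zero]

theorem map_idOff_eq_map_one (hf : ¬ Injective f) (F : Finset ℤ) : f (idOff F) = f 1 := by
  obtain ⟨c, t, hc, hct⟩ := exists_map_eq_map_one_apply_ne f hf
  obtain ⟨d, y, hd, hdy⟩ := exists_map_eq_map_one_apply_eq_none f hc hct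
  induction F using Finset.induction_on with
  | empty => rw [idOff_empty]
  | insert w F _ ih =>
    rw [Finset.insert_eq, idOff_union, map_mul, map_idOff_singleton_eq_map_one f hd hdy,
      ← map_mul, one_mul, ih]

theorem map_eq_of_eventuallyEq (hf : ¬ Injective f) {a b : IZ} (hab : a.1 =ᶠ[cofinite] b.1) :
    f a = f b := by
  set F := (eventually_cofinite.mp hab).toFinset
  have hF : idOff F * a = idOff F * b := ext fun x => by
    rw [idOff_mul_apply, idOff_mul_apply]
    split_ifs with hx
    · rfl
    · simpa [F] using hx
  have hfF := map_idOff_eq_map_one f hf F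
  calc f a = f (1 * idOff F * a) := by rw [map_mul_mul_of_map_eq_map_one f hfF, one_mul]
    _ = f (1 * idOff F * b) := by rw [mul_assoc, mul_assoc, hF]
    _ = f b := by rw [map_mul_mul_of_map_eq_map_one f hfF, one_mul]

end MulHom

def shiftFun (p q : ℤ) (x : ℤ) : Option ℤ :=
  if x < 0 then some (x + p) else if p ≤ x + q then some (x + q) else none

theorem isMIP_shiftFun (p q : ℤ) : IsMIP (shiftFun p q) where
  inj x y c hx hy := by
    simp only [shiftFun] at hx hy
    split_ifs at hx hy <;> simp only [Option.some_inj] at hx hy <;> omega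
  mono x y c d hx hy hxy := by
    simp only [shiftFun] at hx hy
    split_ifs at hx hy <;> simp only [Option.some_inj] at hx hy <;> omega
  cofin_dom := (Set.finite_Ico 0 (p - q)).subset fun x hx => by
    simp only [shiftFun, Set.mem_ofPred_eq] at hx
    split_ifs at hx with h₁ h₂
    exact ⟨by omega, by omega⟩
  cofin_ran := (Set.finite_Ico p q).subset fun y hy => by
    have h₁ := hy (y - p)
    have h₂ := hy (y - q)
    simp only [shiftFun, sub_add_cancel] at h₁ h₂
    constructor <;> by_contra <;> split_ifs at h₁ h₂ <;> simp_all <;> omega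

def shift (p q : ℤ) : IZ := ⟨shiftFun p q, isMIP_shiftFun p q⟩

def HasOffsets (a : IZ) (p q : ℤ) : Prop :=
  (∀ᶠ x in atBot, a.1 x = some (x + p)) ∧ ∀ᶠ x in atTop, a.1 x = some (x + q)

theorem hasOffsets_shift (p q : ℤ) : HasOffsets (shift p q) p q :=
  ⟨eventually_atBot.2 ⟨-1, fun x hx => if_pos (by omega)⟩,
    eventually_atTop.2 ⟨max 0 (p - q), fun x hx => by
      simp only [shift, shiftFun, if_neg (show ¬ x < 0 by omega),
        if_pos (show p ≤ x + q by omega)]⟩⟩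

theorem HasOffsets.mul {a b : IZ} {p q p' q' : ℤ} (ha : HasOffsets a p q)
    (hb : HasOffsets b p' q') : HasOffsets (a * b) (p + p') (q + q') := by
  constructor
  · filter_upwards [ha.1, (tendsto_atBot_add_const_right _ p tendsto_id).eventually hb.1]
      with x hx hy
    exact (mul_apply_of_eq_some hx).trans (hy.trans (congrArg some (add_assoc _ _ _)))
  · filter_upwards [ha.2, (tendsto_atTop_add_const_right _ q tendsto_id).eventually hb.2]
      with x hx hy
    exact (mul_apply_of_eq_some hx).trans (hy.trans (congrArg some (add_assoc _ _ _)))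

theorem HasOffsets.eventuallyEq {a b : IZ} {p q : ℤ} (ha : HasOffsets a p q)
    (hb : HasOffsets b p q) : a.1 =ᶠ[cofinite] b.1 := by
  rw [Int.cofinite_eq, EventuallyEq, eventually_sup]
  exact ⟨by filter_upwards [ha.1, hb.1] with x h₁ h₂ using h₁.trans h₂.symm,
    by filter_upwards [ha.2, hb.2] with x h₁ h₂ using h₁.trans h₂.symm⟩

-- a gap after `a x = u` leaves `u + 1` outside the range of `a`
theorem eventually_apply_add_one_eq (a : IZ) :
    ∀ᶠ x in cofinite, ∀ u v, a.1 x = some u → a.1 (x + 1) = some v → v = u + 1 := by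
  refine eventually_cofinite.2 (a.2.cofin_ran.of_injOn (f := fun x => (a.1 x).getD 0 + 1)
    (fun x hx => ?_) fun x hx x' hx' hxx' => ?_)
  · simp only [Set.mem_ofPred_eq, not_forall] at hx
    obtain ⟨u, v, hu, hv, hne⟩ := hx
    have huv := apply_lt_apply hu hv (lt_add_one x)
    show ∀ z, a.1 z ≠ some ((a.1 x).getD 0 + 1)
    rw [hu, Option.getD_some]
    intro z hz
    rcases le_or_gt z x with hzx | hxz
    · have := a.2.mono hz hu hzx
      omega
    · have := a.2.mono hv hz (by omega)
      omega
  · simp only [Set.mem_ofPred_eq, not_forall] at hx hx'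
    obtain ⟨u, -, hu, -⟩ := hx
    obtain ⟨u', -, hu', -⟩ := hx'
    simp only [hu, hu', Option.getD_some, add_left_inj] at hxx'
    exact a.2.inj hu (hxx' ▸ hu')

theorem eventually_apply_add_one (a : IZ) :
    ∀ᶠ x in cofinite, ∃ u, a.1 x = some u ∧ a.1 (x + 1) = some (u + 1) := by
  have hdom : ∀ᶠ x in cofinite, a.1 x ≠ none := by
    simpa only [eventually_cofinite, ne_eq, not_not] using a.2.cofin_dom
  filter_upwards [hdom, (add_left_injective 1).tendsto_cofinite.eventually hdom,
    eventually_apply_add_one_eq a]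
    with x h₀ h₁ hstep
  obtain ⟨u, hu⟩ := Option.ne_none_iff_exists'.mp h₀
  obtain ⟨v, hv⟩ := Option.ne_none_iff_exists'.mp h₁
  exact ⟨u, hu, hstep u v hu hv ▸ hv⟩

theorem exists_eventually_eq_add_atTop {f : ℤ → Option ℤ}
    (hf : ∀ᶠ x in atTop, ∃ u, f x = some u ∧ f (x + 1) = some (u + 1)) :
    ∃ q, ∀ᶠ x in atTop, f x = some (x + q) := by
  obtain ⟨N, hN⟩ := eventually_atTop.1 hf
  obtain ⟨u, hu, -⟩ := hN N le_rfl
  refine ⟨u - N, eventually_atTop.2 ⟨N, fun x hx => ?_⟩⟩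
  induction x, hx using Int.leInduction with
  | base => rw [hu, add_sub_cancel]
  | succ x hx ih =>
    obtain ⟨v, hv, hv'⟩ := hN x hx
    rw [hv', ← Option.some_inj.mp (ih.symm.trans hv)]
    congr 1
    ring

theorem exists_eventually_eq_add_atBot {f : ℤ → Option ℤ}
    (hf : ∀ᶠ x in atBot, ∃ u, f x = some u ∧ f (x + 1) = some (u + 1)) :
    ∃ p, ∀ᶠ x in atBot, f x = some (x + p) := by
  obtain ⟨N, hN⟩ := eventually_atBot.1 hf
  obtain ⟨u, hu, -⟩ := hN N le_rfl
  refine ⟨u - N, eventually_atBot.2 ⟨N, fun x hx => ?_⟩⟩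
  induction x, hx using Int.leInductionDown with
  | base => rw [hu, add_sub_cancel]
  | pred x hx ih =>
    obtain ⟨v, hv, hv'⟩ := hN (x - 1) (by omega)
    rw [sub_add_cancel, ih, Option.some_inj] at hv'
    rw [hv]
    congr 1
    omega

theorem exists_hasOffsets (a : IZ) : ∃ p q, HasOffsets a p q := by
  have h := eventually_apply_add_one a
  rw [Int.cofinite_eq, eventually_sup] at h
  obtain ⟨p, hp⟩ := exists_eventually_eq_add_atBot h.1
  obtain ⟨q, hq⟩ := exists_eventually_eq_add_atTop h.2
  exact ⟨p, q, hp, hq⟩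

end IZ

theorem statement16_general {S : Type*} [Semigroup S] (h : IZ → S)
    (hhom : ∀ a b : IZ, h (a * b) = h a * h b) :
    Function.Injective h ∨
      ∃ g : ℤ × ℤ → S, (∀ p q : ℤ × ℤ, g (p + q) = g p * g q) ∧
        Set.range g = Set.range h := by
  by_cases hinj : Function.Injective h
  · exact Or.inl hinj
  have hoff : ∀ {a b p q}, IZ.HasOffsets a p q → IZ.HasOffsets b p q → h a = h b :=
    fun ha hb => IZ.map_eq_of_eventuallyEq ⟨h, hhom⟩ hinj (ha.eventuallyEq hb)
  refine Or.inr ⟨fun pq => h (IZ.shift pq.1 pq.2), fun p q => ?_, ?_⟩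
  · rw [← hhom]
    exact hoff (IZ.hasOffsets_shift _ _) ((IZ.hasOffsets_shift _ _).mul (IZ.hasOffsets_shift _ _))
  · refine (Set.range_comp_subset_range _ h).antisymm ?_
    rintro _ ⟨a, rfl⟩
    obtain ⟨p, q, ha⟩ := IZ.exists_hasOffsets a
    exact ⟨(p, q), hoff (IZ.hasOffsets_shift p q) ha⟩

/-- Every non-constant (non-annihilating) semigroup homomorphism `h` from
`𝓘↗∞(ℤ)` into a semigroup `S` is either injective, or its image is a homomorphic image
of the group `ℤ × ℤ`: there is a map `g : ℤ × ℤ → S` turning addition into multiplication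
whose range is exactly the range of `h`. -/
theorem statement16 {S : Type*} [Semigroup S] (h : IZ → S)
    (hhom : ∀ a b : IZ, h (a * b) = h a * h b)
    (hnc : ∃ a b : IZ, h a ≠ h b) :
    Function.Injective h ∨
      ∃ g : ℤ × ℤ → S, (∀ p q : ℤ × ℤ, g (p + q) = g p * g q) ∧
        Set.range g = Set.range h :=
  statement16_general h hhom
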